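/- arXiv:0901.4064 — 2 statements merged into one kernel-verified Lean document; each statement's English description precedes it below -/
import Mathlib

section
/- With q̂, p̂ in an associative ℝ-algebra and the VI^ℏ structure constants μ̂₂₃¹ = p̂/p₀, μ̂₂₃² = ωq̂/p₀, μ̂₃₁¹ = ωq̂/p₀, μ̂₃₁² = −p̂/p₀, others zero, the quantum Jacobian vanishes identically, without using any commutation relation between q̂ and p̂. -/
/-!
The structure constants `μ̂ᵢⱼ³` and `μ̂₁₂ᵏ` all vanish, so `span(e₁, e₂)` is an abelian ideal
containing every bracket (`e₃` is index `2` of `Fin 3`). Hence a double bracket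
`[[eᵢ, eⱼ], eₖ]` vanishes unless `k = 3` and `3 ∈ {i, j}`, and the surviving terms of the
Jacobian come in pairs `[[e₃, eₖ], e₃] + [[eₖ, e₃], e₃]` that cancel by antisymmetry alone.
Products in `A` are never reordered, so no relation between `q̂` and `p̂` is needed.
-/

/-- Antisymmetric bracket on the rank-3 free module over an ℝ-algebra `A`,
defined by structure constants `m i j k ∈ A`. -/
noncomputable def qbkt {A : Type*} [Ring A] [Algebra ℝ A]
    (m : Fin 3 → Fin 3 → Fin 3 → A) (x y : Fin 3 → A) : Fin 3 → A :=
  fun k => ∑ i : Fin 3, ∑ j : Fin 3, x i * y j * m i j k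

/-- The quantum Jacobian `Ĵ(x,y,z) = [[x,y],z] + [[y,z],x] + [[z,x],y]`. -/
noncomputable def qjac {A : Type*} [Ring A] [Algebra ℝ A]
    (m : Fin 3 → Fin 3 → Fin 3 → A) (x y z : Fin 3 → A) : Fin 3 → A :=
  qbkt m (qbkt m x y) z + qbkt m (qbkt m y z) x + qbkt m (qbkt m z x) y

/-- Structure constants of the quantum algebra VI^ℏ:
`μ̂₂₃¹ = p̂/p₀`, `μ̂₂₃² = ωq̂/p₀`, `μ̂₃₁¹ = ωq̂/p₀`, `μ̂₃₁² = −p̂/p₀`. -/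
noncomputable def muVIh {A : Type*} [Ring A] [Algebra ℝ A]
    (qh ph : A) (ω p₀ : ℝ) : Fin 3 → Fin 3 → Fin 3 → A :=
  ![![![0, 0, 0], ![0, 0, 0], ![-(p₀⁻¹ • (ω • qh)), p₀⁻¹ • ph, 0]],
    ![![0, 0, 0], ![0, 0, 0], ![p₀⁻¹ • ph, p₀⁻¹ • (ω • qh), 0]],
    ![![p₀⁻¹ • (ω • qh), -(p₀⁻¹ • ph), 0], ![-(p₀⁻¹ • ph), -(p₀⁻¹ • (ω • qh)), 0],
      ![0, 0, 0]]]

section AbelianIdeal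

variable {A : Type*} [Ring A] [Algebra ℝ A] (m : Fin 3 → Fin 3 → Fin 3 → A)

theorem qbkt_basis (i j : Fin 3) :
    qbkt m (fun l => if l = i then 1 else 0) (fun l => if l = j then 1 else 0) = m i j := by
  funext k
  simp [qbkt]

theorem qbkt_basis_right_apply (x : Fin 3 → A) (k l : Fin 3) :
    qbkt m x (fun l => if l = k then 1 else 0) l = ∑ a, x a * m a k l := by
  simp [qbkt]

theorem qbkt_zero_left (y : Fin 3 → A) : qbkt m 0 y = 0 := by
  funext k
  simp [qbkt]

theorem qbkt_neg_left (x y : Fin 3 → A) : qbkt m (-x) y = -qbkt m x y := by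
  funext k
  simp [qbkt]

theorem qbkt_antisymm_add (hanti : ∀ i j, m j i = -m i j) (i j : Fin 3) (z : Fin 3 → A) :
    qbkt m (m i j) z + qbkt m (m j i) z = 0 := by
  rw [hanti i j, qbkt_neg_left, add_neg_cancel]

theorem diag_eq_zero_of_antisymm (hanti : ∀ i j, m j i = -m i j) (i : Fin 3) : m i i = 0 := by
  have h2 : (2 : ℝ) • m i i = 0 := by
    rw [two_smul]
    nth_rw 1 [hanti i i]
    exact neg_add_cancel _
  exact (smul_eq_zero.mp h2).resolve_left two_ne_zero

variable (c : Fin 3)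

theorem qbkt_basis_right_eq_zero (habel : ∀ i j, i ≠ c → j ≠ c → m i j = 0)
    {x : Fin 3 → A} (hx : x c = 0) {k : Fin 3} (hk : k ≠ c) :
    qbkt m x (fun l => if l = k then 1 else 0) = 0 := by
  funext l
  rw [qbkt_basis_right_apply, Pi.zero_apply]
  refine Finset.sum_eq_zero fun a _ => ?_
  by_cases ha : a = c
  · simp [ha, hx]
  · simp [habel a k ha hk]

theorem qjac_basis_eq_zero_of_abelian_ideal (hanti : ∀ i j, m j i = -m i j) (hderiv : ∀ i j, m i j c = 0)
    (habel : ∀ i j, i ≠ c → j ≠ c → m i j = 0) (i j k : Fin 3) :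
    qjac m (fun l => if l = i then 1 else 0) (fun l => if l = j then 1 else 0)
      (fun l => if l = k then 1 else 0) = 0 := by
  have hdouble := fun {i j k} (hk : k ≠ c) =>
    qbkt_basis_right_eq_zero m c habel (hderiv i j) hk
  simp only [qjac, qbkt_basis]
  by_cases hi : i = c <;> by_cases hj : j = c <;> by_cases hk : k = c
  all_goals subst_vars; simp (disch := assumption) only [hdouble, habel, qbkt_zero_left,
    diag_eq_zero_of_antisymm m hanti, qbkt_antisymm_add m hanti, add_zero, zero_add]

end AbelianIdeal

theorem VIh_jacobi_general {A : Type*} [Ring A] [Algebra ℝ A]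
    (qh ph : A) (ω p₀ : ℝ) :
    ∀ i j k : Fin 3,
      qjac (muVIh qh ph ω p₀)
        (fun l => if l = i then 1 else 0)
        (fun l => if l = j then 1 else 0)
        (fun l => if l = k then 1 else 0) = 0 := by
  refine qjac_basis_eq_zero_of_abelian_ideal _ 2 ?_ ?_ ?_
  · intro i j
    fin_cases i <;> fin_cases j <;> funext l <;> fin_cases l <;> simp [muVIh]
  · intro i j
    fin_cases i <;> fin_cases j <;> simp [muVIh]
  · intro i j hi hj
    fin_cases i <;> fin_cases j <;> simp_all [muVIh]

/-- The quantum algebra VI^ℏ satisfies the Jacobi identity on all basis triples,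
without assuming any commutation relation between `q̂` and `p̂`. -/
theorem VIh_jacobi {A : Type*} [Ring A] [Algebra ℝ A]
    (qh ph : A) (ω p₀ : ℝ) (hp₀ : p₀ ≠ 0) :
    ∀ i j k : Fin 3,
      qjac (muVIh qh ph ω p₀)
        (fun l => if l = i then 1 else 0)
        (fun l => if l = j then 1 else 0)
        (fun l => if l = k then 1 else 0) = 0 :=
  VIh_jacobi_general qh ph ω p₀
end

section
/- For the quantum algebra IV^ℏ with structure constants μ̂₁₂¹ = Â₋/√(2p₀), μ̂₁₂² = −Â₊/√(2p₀), μ̂₁₂³ = 1, μ̂₂₃³ = −Â₋/√(2p₀), μ̂₃₁³ = Â₊/√(2p₀) (others zero), the quantum Jacobian of (e₁,e₂,e₃) equals (0, 0, (1/p₀)[Â₊,Â₋]). -/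
/-- Structure constants of the quantum algebra IV^ℏ:
`μ̂₁₂¹ = Â₋/√(2p₀)`, `μ̂₁₂² = −Â₊/√(2p₀)`, `μ̂₁₂³ = 1`, `μ̂₂₃³ = −Â₋/√(2p₀)`,
`μ̂₃₁³ = Â₊/√(2p₀)`. -/
noncomputable def muIVh {A : Type*} [Ring A] [Algebra ℝ A]
    (Ap Am : A) (p₀ : ℝ) : Fin 3 → Fin 3 → Fin 3 → A :=
  ![![![0, 0, 0], ![(Real.sqrt (2 * p₀))⁻¹ • Am, -((Real.sqrt (2 * p₀))⁻¹ • Ap), 1],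
      ![0, 0, -((Real.sqrt (2 * p₀))⁻¹ • Ap)]],
    ![![-((Real.sqrt (2 * p₀))⁻¹ • Am), (Real.sqrt (2 * p₀))⁻¹ • Ap, -1], ![0, 0, 0],
      ![0, 0, -((Real.sqrt (2 * p₀))⁻¹ • Am)]],
    ![![0, 0, (Real.sqrt (2 * p₀))⁻¹ • Ap], ![0, 0, (Real.sqrt (2 * p₀))⁻¹ • Am],
      ![0, 0, 0]]]

/-! On basis vectors the bracket returns the structure constants, so the `k`-th component of
`Ĵ(e₁,e₂,e₃)` is `∑ᵢ (μ₁₂ⁱ μᵢ₃ᵏ + μ₂₃ⁱ μᵢ₁ᵏ + μ₃₁ⁱ μᵢ₂ᵏ)`. For IV^ℏ only `k = 3` survives,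
where the four nonzero products add up to `2c²[Â₊,Â₋]` with `c = 1/√(2p₀)`, and `2c² = 1/p₀`. -/

open Finset

section StructureConstants

variable {A : Type*} [Ring A] [Algebra ℝ A] (m : Fin 3 → Fin 3 → Fin 3 → A)

theorem qbkt_single_right (x : Fin 3 → A) (j k : Fin 3) :
    qbkt m x (Pi.single j 1) k = ∑ i, x i * m i j k := by
  simp [qbkt, Pi.single_apply]

theorem qbkt_single_single (i j : Fin 3) :
    qbkt m (Pi.single i 1) (Pi.single j 1) = m i j := by
  funext k
  simp [qbkt_single_right, Pi.single_apply]

theorem qjac_single_apply (k : Fin 3) :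
    qjac m (Pi.single 0 1) (Pi.single 1 1) (Pi.single 2 1) k =
      ∑ i, (m 0 1 i * m i 2 k + m 1 2 i * m i 0 k + m 2 0 i * m i 1 k) := by
  simp only [qjac, qbkt_single_single, Pi.add_apply, qbkt_single_right, sum_add_distrib]

end StructureConstants

theorem qjac_muIVh_single {A : Type*} [Ring A] [Algebra ℝ A] (Ap Am : A) (p₀ : ℝ) :
    qjac (muIVh Ap Am p₀) (Pi.single 0 1) (Pi.single 1 1) (Pi.single 2 1) =
      ![0, 0, (2 * (√(2 * p₀))⁻¹ ^ 2) • (Ap * Am - Am * Ap)] := by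
  funext k
  rw [qjac_single_apply]
  unfold muIVh
  generalize (√(2 * p₀))⁻¹ = c
  fin_cases k
  · simp [Fin.sum_univ_three]
  · simp [Fin.sum_univ_three]
  · simp only [Fin.sum_univ_three, Fin.reduceFinMk, Matrix.cons_val, Matrix.cons_val_zero,
      Matrix.cons_val_one, mul_zero, mul_one, add_zero, mul_neg, neg_mul, smul_mul_smul_comm]
    module

/-- For IV^ℏ, the quantum Jacobian of `(e₁,e₂,e₃)` equals `(0, 0, (1/p₀)[Â₊,Â₋])`. -/
theorem IVh_jacobian {A : Type*} [Ring A] [Algebra ℝ A]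
    (Ap Am : A) (p₀ : ℝ) (hp₀ : 0 < p₀) :
    qjac (muIVh Ap Am p₀)
        (fun l => if l = 0 then 1 else 0)
        (fun l => if l = 1 then 1 else 0)
        (fun l => if l = 2 then 1 else 0)
      = ![0, 0, p₀⁻¹ • (Ap * Am - Am * Ap)] := by
  have basis (i : Fin 3) : (fun l => if l = i then (1 : A) else 0) = Pi.single i 1 :=
    funext fun l => (Pi.single_apply i 1 l).symm
  have scale : 2 * (√(2 * p₀))⁻¹ ^ 2 = p₀⁻¹ := by
    rw [inv_pow, Real.sq_sqrt (by positivity)]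
    field_simp
  rw [basis, basis, basis, qjac_muIVh_single, scale]
end
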